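/- Let h : ℝⁿ × ℝᵐ → [0,1] be log-concave (jointly), and let μ be a probability measure on ℝᵖ with log-concave density ψ with respect to Lebesgue measure. If f(x,u,w) = A x + B u + w (with ℝᵖ = ℝⁿ), then (x,u) ↦ ∫_{ℝⁿ} h(Ax + Bu + w) ψ(w) dw is log-concave on ℝⁿ × ℝᵐ. -/

import Mathlib

/-!
The integrand `(x, u, w) ↦ h (A x + B u + w) * ψ w` is log-concave, so it suffices that integrating
out `w` preserves log-concavity. That is the Prékopa–Leindler inequality on `ℝⁿ`: if
`f x ^ l * g y ^ (1 - l) ≤ h (l • x + (1 - l) • y)` then `(∫ f) ^ l * (∫ g) ^ (1 - l) ≤ ∫ h`.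
On `ℝ`, after normalising `f` and `g` to supremum `1`, the superlevel sets satisfy
`l • {f > t} + (1 - l) • {g > t} ⊆ {h > t}`, so the one-dimensional Brunn–Minkowski inequality
`|A| + |B| ≤ |A + B|` and the layer-cake formula give `l ∫ f + (1 - l) ∫ g ≤ ∫ h`, and weighted
AM–GM finishes; unbounded functions are truncated. Fubini carries the inequality to products, hence
to `ℝⁿ` by induction on `n`.
-/

open MeasureTheory Set
open scoped ENNReal Pointwise

theorem ENNReal.rpow_mul_rpow_one_sub_self (x : ℝ≥0∞) {l : ℝ} (hl₀ : 0 ≤ l) (hl₁ : l ≤ 1) :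
    x ^ l * x ^ (1 - l) = x := by
  rw [← ENNReal.rpow_add_of_nonneg _ _ hl₀ (by linarith), add_sub_cancel, ENNReal.rpow_one]

theorem ENNReal.rpow_mul_rpow_one_sub_le_add (x y : ℝ≥0∞) {l : ℝ} (hl₀ : 0 < l) (hl₁ : l < 1) :
    x ^ l * y ^ (1 - l) ≤ ENNReal.ofReal l * x + ENNReal.ofReal (1 - l) * y := by
  have hl₁' : 0 < 1 - l := sub_pos.mpr hl₁
  have key := young_inequality (x ^ l) (y ^ (1 - l)) (Real.HolderConjugate.inv_one_sub_inv hl₀ hl₁)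
  rwa [← rpow_mul, ← rpow_mul, mul_inv_cancel₀ hl₀.ne', mul_inv_cancel₀ hl₁'.ne', rpow_one,
    rpow_one, ofReal_inv_of_pos hl₀, ofReal_inv_of_pos hl₁', div_eq_mul_inv, inv_inv,
    div_eq_mul_inv, inv_inv, mul_comm x, mul_comm y] at key

theorem lintegral_eq_lintegral_meas_ofReal_lt {α : Type*} [MeasurableSpace α] (μ : Measure α)
    {f : α → ℝ≥0∞} (hf : AEMeasurable f μ) (hf_top : ∀ x, f x ≠ ∞) :
    ∫⁻ x, f x ∂μ = ∫⁻ t in Ioi 0, μ {x | ENNReal.ofReal t < f x} := by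
  have h := lintegral_eq_lintegral_meas_lt μ (ae_of_all _ fun x => (f x).toReal_nonneg)
    hf.ennreal_toReal
  simp only [ENNReal.ofReal_toReal (hf_top _)] at h
  rw [h]
  refine setLIntegral_congr_fun measurableSet_Ioi fun t ht => ?_
  simp only [ENNReal.ofReal_lt_iff_lt_toReal ht.le (hf_top _)]

theorem lintegral_eq_iSup_lintegral_min_natCast {α : Type*} [MeasurableSpace α] (μ : Measure α)
    {f : α → ℝ≥0∞} (hf : Measurable f) : ∫⁻ x, f x ∂μ = ⨆ N : ℕ, ∫⁻ x, min (f x) N ∂μ := by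
  rw [← lintegral_iSup (fun N => hf.min measurable_const)
    fun M N hMN x => min_le_min le_rfl (Nat.cast_le.mpr hMN)]
  simp [← inf_iSup_eq, ENNReal.iSup_natCast]

theorem smul_setOf_lt_add_smul_setOf_lt_subset {E : Type*} [AddCommGroup E] [Module ℝ E]
    {f g h : E → ℝ≥0∞} {l : ℝ} (hl₀ : 0 < l) (hl₁ : l < 1)
    (hfgh : ∀ x y, f x ^ l * g y ^ (1 - l) ≤ h (l • x + (1 - l) • y)) (τ : ℝ≥0∞) :
    l • {x | τ < f x} + (1 - l) • {y | τ < g y} ⊆ {z | τ < h z} := by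
  rintro _ ⟨_, ⟨x, hx, rfl⟩, _, ⟨y, hy, rfl⟩, rfl⟩
  calc τ = τ ^ l * τ ^ (1 - l) := (τ.rpow_mul_rpow_one_sub_self hl₀.le hl₁.le).symm
    _ < f x ^ l * g y ^ (1 - l) :=
        ENNReal.mul_lt_mul (ENNReal.rpow_lt_rpow hx hl₀) (ENNReal.rpow_lt_rpow hy (by linarith))
    _ ≤ h (l • x + (1 - l) • y) := hfgh x y

namespace Real

theorem volume_add_volume_le_volume_add_of_isCompact {K L : Set ℝ} (hK : IsCompact K)
    (hL : IsCompact L) (hK₀ : K.Nonempty) (hL₀ : L.Nonempty) :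
    volume K + volume L ≤ volume (K + L) := by
  set a := sSup K
  set b := sInf L
  have ha : a ∈ K := hK.sSup_mem hK₀
  have hb : b ∈ L := hL.sInf_mem hL₀
  -- the translates `K + b` and `a + L` of `K` and `L` lie in `K + L` and meet only at `a + b`
  have hinter : (b +ᵥ K) ∩ (a +ᵥ L) ⊆ {a + b} := by
    rintro _ ⟨⟨x, hx, rfl⟩, ⟨y, hy, hxy⟩⟩
    have h₁ : x ≤ a := le_csSup hK.bddAbove hx
    have h₂ : b ≤ y := csInf_le hL.bddBelow hy
    simp only [vadd_eq_add] at hxy ⊢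
    rw [mem_singleton_iff]
    linarith
  calc volume K + volume L = volume (b +ᵥ K) + volume (a +ᵥ L) := by
        rw [measure_vadd, measure_vadd]
    _ = volume ((b +ᵥ K) ∪ (a +ᵥ L)) + volume ((b +ᵥ K) ∩ (a +ᵥ L)) :=
        (measure_union_add_inter _ (hL.vadd a).measurableSet).symm
    _ ≤ volume (K + L) + 0 := by
        gcongr
        · refine union_subset ?_ ?_
          · rintro _ ⟨x, hx, rfl⟩
            simpa [add_comm] using add_mem_add hx hb
          · rintro _ ⟨y, hy, rfl⟩
            exact add_mem_add ha hy
        · exact (measure_mono hinter).trans (by simp)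
    _ = volume (K + L) := add_zero _

theorem volume_add_volume_le_volume_add {A B : Set ℝ} (hA : MeasurableSet A)
    (hB : MeasurableSet B) (hA₀ : A.Nonempty) (hB₀ : B.Nonempty) :
    volume A + volume B ≤ volume (A + B) := by
  obtain ⟨a, ha⟩ := hA₀
  obtain ⟨b, hb⟩ := hB₀
  rw [hA.measure_eq_iSup_isCompact, hB.measure_eq_iSup_isCompact]
  simp only [iSup_and']
  refine ENNReal.biSup_add_biSup_le' ⟨∅, empty_subset _, isCompact_empty⟩
    ⟨∅, empty_subset _, isCompact_empty⟩ fun K ⟨hKA, hK⟩ L ⟨hLB, hL⟩ => ?_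
  calc volume K + volume L ≤ volume (insert a K) + volume (insert b L) := by
        gcongr <;> exact subset_insert _ _
    _ ≤ volume (insert a K + insert b L) :=
        volume_add_volume_le_volume_add_of_isCompact (hK.insert a) (hL.insert b)
          (insert_nonempty _ _) (insert_nonempty _ _)
    _ ≤ volume (A + B) :=
        measure_mono (add_subset_add (insert_subset ha hKA) (insert_subset hb hLB))

theorem weighted_add_volume_setOf_lt_le_of_iSup_eq_one {f g h : ℝ → ℝ≥0∞} (hf : Measurable f)
    (hg : Measurable g) (hf₁ : ⨆ x, f x = 1) (hg₁ : ⨆ x, g x = 1) {l : ℝ} (hl₀ : 0 < l)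
    (hl₁ : l < 1) (hfgh : ∀ x y, f x ^ l * g y ^ (1 - l) ≤ h (l • x + (1 - l) • y))
    (t : ℝ) :
    ENNReal.ofReal l * volume {x | ENNReal.ofReal t < f x} +
      ENNReal.ofReal (1 - l) * volume {y | ENNReal.ofReal t < g y} ≤
        volume {z | ENNReal.ofReal t < h z} := by
  set τ := ENNReal.ofReal t
  rcases lt_or_ge t 1 with ht₁ | ht₁
  · have hτ : τ < 1 := ENNReal.ofReal_lt_one.mpr ht₁
    have hf₀ : {x | τ < f x}.Nonempty := lt_iSup_iff.mp (hf₁ ▸ hτ : τ < ⨆ x, f x)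
    have hg₀ : {y | τ < g y}.Nonempty := lt_iSup_iff.mp (hg₁ ▸ hτ : τ < ⨆ y, g y)
    calc ENNReal.ofReal l * volume {x | τ < f x} + ENNReal.ofReal (1 - l) * volume {y | τ < g y}
        = volume (l • {x | τ < f x}) + volume ((1 - l) • {y | τ < g y}) := by
          simp [abs_of_pos hl₀, abs_of_pos (sub_pos.mpr hl₁)]
      _ ≤ volume (l • {x | τ < f x} + (1 - l) • {y | τ < g y}) :=
          volume_add_volume_le_volume_add
            ((measurableSet_lt measurable_const hf).const_smul₀ _)
            ((measurableSet_lt measurable_const hg).const_smul₀ _) (hf₀.smul_set) hg₀.smul_set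
      _ ≤ volume {z | τ < h z} :=
          measure_mono (smul_setOf_lt_add_smul_setOf_lt_subset hl₀ hl₁ hfgh τ)
  · have hτ : 1 ≤ τ := ENNReal.one_le_ofReal.mpr ht₁
    have hf_empty : {x | τ < f x} = ∅ :=
      eq_empty_of_forall_notMem fun x hx => (hx.trans_le ((hf₁ ▸ le_iSup f x).trans hτ)).false
    have hg_empty : {y | τ < g y} = ∅ :=
      eq_empty_of_forall_notMem fun y hy => (hy.trans_le ((hg₁ ▸ le_iSup g y).trans hτ)).false
    simp [hf_empty, hg_empty]

theorem weighted_add_lintegral_le_of_iSup_eq_one {f g h : ℝ → ℝ≥0∞} (hf : Measurable f)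
    (hg : Measurable g) (hh : Measurable h) (hf₁ : ⨆ x, f x = 1) (hg₁ : ⨆ x, g x = 1)
    (hh_top : ∀ x, h x ≠ ∞) {l : ℝ} (hl₀ : 0 < l) (hl₁ : l < 1)
    (hfgh : ∀ x y, f x ^ l * g y ^ (1 - l) ≤ h (l • x + (1 - l) • y)) :
    ENNReal.ofReal l * (∫⁻ x, f x) + ENNReal.ofReal (1 - l) * ∫⁻ y, g y ≤ ∫⁻ z, h z := by
  have hf_top : ∀ x, f x ≠ ∞ := fun x => ((hf₁ ▸ le_iSup f x).trans_lt ENNReal.one_lt_top).ne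
  have hg_top : ∀ y, g y ≠ ∞ := fun y => ((hg₁ ▸ le_iSup g y).trans_lt ENNReal.one_lt_top).ne
  have hf_level : Measurable fun t : ℝ => volume {x | ENNReal.ofReal t < f x} :=
    Antitone.measurable fun s t hst =>
      measure_mono fun x hx => (ENNReal.ofReal_le_ofReal hst).trans_lt hx
  rw [lintegral_eq_lintegral_meas_ofReal_lt volume hf.aemeasurable hf_top,
    lintegral_eq_lintegral_meas_ofReal_lt volume hg.aemeasurable hg_top,
    lintegral_eq_lintegral_meas_ofReal_lt volume hh.aemeasurable hh_top,
    ← lintegral_const_mul' _ _ ENNReal.ofReal_ne_top,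
    ← lintegral_const_mul' _ _ ENNReal.ofReal_ne_top,
    ← lintegral_add_left (hf_level.const_mul _)]
  exact setLIntegral_mono' measurableSet_Ioi fun t _ =>
    weighted_add_volume_setOf_lt_le_of_iSup_eq_one hf hg hf₁ hg₁ hl₀ hl₁ hfgh t

theorem lintegral_rpow_mul_rpow_le_of_iSup_ne_top {f g h : ℝ → ℝ≥0∞} (hf : Measurable f)
    (hg : Measurable g) (hh : Measurable h) (hf_top : ⨆ x, f x ≠ ∞) (hg_top : ⨆ y, g y ≠ ∞)
    (hh_top : ∀ z, h z ≠ ∞) {l : ℝ} (hl₀ : 0 < l) (hl₁ : l < 1)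
    (hfgh : ∀ x y, f x ^ l * g y ^ (1 - l) ≤ h (l • x + (1 - l) • y)) :
    (∫⁻ x, f x) ^ l * (∫⁻ y, g y) ^ (1 - l) ≤ ∫⁻ z, h z := by
  have hl₁' : 0 < 1 - l := sub_pos.mpr hl₁
  set Mf := ⨆ x, f x
  set Mg := ⨆ y, g y
  rcases eq_or_ne Mf 0 with hMf | hMf
  · have hf0 : ∀ x, f x = 0 := fun x => le_zero_iff.mp (hMf ▸ le_iSup f x)
    simp [hf0, ENNReal.zero_rpow_of_pos hl₀]
  rcases eq_or_ne Mg 0 with hMg | hMg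
  · have hg0 : ∀ y, g y = 0 := fun y => le_zero_iff.mp (hMg ▸ le_iSup g y)
    simp [hg0, ENNReal.zero_rpow_of_pos hl₁']
  have hMf_l : Mf ^ l ≠ 0 := (ENNReal.rpow_pos (pos_iff_ne_zero.mpr hMf) hf_top).ne'
  have hMf_l_top : Mf ^ l ≠ ∞ := ENNReal.rpow_ne_top_of_nonneg hl₀.le hf_top
  set C := Mf ^ l * Mg ^ (1 - l)
  have hC : C ≠ 0 := mul_ne_zero hMf_l (ENNReal.rpow_pos (pos_iff_ne_zero.mpr hMg) hg_top).ne'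
  have hC_top : C ≠ ∞ :=
    ENNReal.mul_ne_top hMf_l_top (ENNReal.rpow_ne_top_of_nonneg hl₁'.le hg_top)
  have hsplit (a b : ℝ≥0∞) :
      (a * Mf⁻¹) ^ l * (b * Mg⁻¹) ^ (1 - l) = a ^ l * b ^ (1 - l) * C⁻¹ := by
    rw [ENNReal.mul_rpow_of_nonneg _ _ hl₀.le, ENNReal.mul_rpow_of_nonneg _ _ hl₁'.le,
      mul_mul_mul_comm, ENNReal.inv_rpow, ENNReal.inv_rpow,
      ← ENNReal.mul_inv (.inl hMf_l) (.inl hMf_l_top)]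
  -- normalize `f` and `g` to have supremum `1`
  have hnorm := weighted_add_lintegral_le_of_iSup_eq_one (hf.mul_const Mf⁻¹) (hg.mul_const Mg⁻¹)
    (hh.mul_const C⁻¹) (by rw [← ENNReal.iSup_mul, ENNReal.mul_inv_cancel hMf hf_top])
    (by rw [← ENNReal.iSup_mul, ENNReal.mul_inv_cancel hMg hg_top])
    (fun z => ENNReal.mul_ne_top (hh_top z) (ENNReal.inv_ne_top.mpr hC)) hl₀ hl₁ fun x y => by
      rw [hsplit]
      exact mul_le_mul_left (hfgh x y) _
  rw [lintegral_mul_const _ hf, lintegral_mul_const _ hg, lintegral_mul_const _ hh] at hnorm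
  calc (∫⁻ x, f x) ^ l * (∫⁻ y, g y) ^ (1 - l)
      = C * (((∫⁻ x, f x) * Mf⁻¹) ^ l * ((∫⁻ y, g y) * Mg⁻¹) ^ (1 - l)) := by
        rw [hsplit, mul_comm C, mul_assoc, ENNReal.inv_mul_cancel hC hC_top, mul_one]
    _ ≤ C * (ENNReal.ofReal l * ((∫⁻ x, f x) * Mf⁻¹)
          + ENNReal.ofReal (1 - l) * ((∫⁻ y, g y) * Mg⁻¹)) := by
        gcongr
        exact ENNReal.rpow_mul_rpow_one_sub_le_add _ _ hl₀ hl₁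
    _ ≤ C * ((∫⁻ z, h z) * C⁻¹) := by gcongr
    _ = ∫⁻ z, h z := by rw [mul_comm, mul_assoc, ENNReal.inv_mul_cancel hC hC_top, mul_one]

theorem lintegral_rpow_mul_rpow_le {f g h : ℝ → ℝ≥0∞} (hf : Measurable f)
    (hg : Measurable g) (hh : Measurable h) {l : ℝ} (hl₀ : 0 < l) (hl₁ : l < 1)
    (hfgh : ∀ x y, f x ^ l * g y ^ (1 - l) ≤ h (l • x + (1 - l) • y)) :
    (∫⁻ x, f x) ^ l * (∫⁻ y, g y) ^ (1 - l) ≤ ∫⁻ z, h z := by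
  have hl₁' : 0 < 1 - l := sub_pos.mpr hl₁
  have htrunc (N : ℕ) :
      (∫⁻ x, min (f x) N) ^ l * (∫⁻ y, min (g y) N) ^ (1 - l) ≤ ∫⁻ z, h z := by
    have hN_top : (N : ℝ≥0∞) ≠ ∞ := ENNReal.natCast_ne_top N
    refine (lintegral_rpow_mul_rpow_le_of_iSup_ne_top (hf.min measurable_const)
      (hg.min measurable_const) (hh.min measurable_const)
      (ne_top_of_le_ne_top hN_top (iSup_le fun _ => min_le_right _ _))
      (ne_top_of_le_ne_top hN_top (iSup_le fun _ => min_le_right _ _))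
      (fun z => ne_top_of_le_ne_top hN_top (min_le_right _ _)) hl₀ hl₁
      fun x y => le_min ?_ ?_).trans (lintegral_mono fun z => min_le_left _ _)
    · exact le_trans (by gcongr <;> exact min_le_left _ _) (hfgh x y)
    · calc _ ≤ (N : ℝ≥0∞) ^ l * (N : ℝ≥0∞) ^ (1 - l) := by gcongr <;> exact min_le_right _ _
        _ = N := ENNReal.rpow_mul_rpow_one_sub_self _ hl₀.le hl₁.le
  have hrpow_iSup {p : ℝ} (hp : 0 < p) (a : ℕ → ℝ≥0∞) : (⨆ N, a N) ^ p = ⨆ N, a N ^ p :=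
    (ENNReal.orderIsoRpow p hp).map_iSup a
  rw [lintegral_eq_iSup_lintegral_min_natCast _ hf, lintegral_eq_iSup_lintegral_min_natCast _ hg,
    hrpow_iSup hl₀, hrpow_iSup hl₁', ENNReal.iSup_mul]
  simp only [ENNReal.mul_iSup]
  refine iSup₂_le fun M N => le_trans ?_ (htrunc (max M N))
  gcongr
  exacts [le_max_left M N, le_max_right M N]

end Real

def PrekopaLeindler (E : Type*) [AddCommGroup E] [Module ℝ E] [MeasureSpace E] : Prop :=
  ∀ f g h : E → ℝ≥0∞, Measurable f → Measurable g → Measurable h → ∀ l : ℝ, 0 ≤ l → l ≤ 1 →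
    (∀ x y, f x ^ l * g y ^ (1 - l) ≤ h (l • x + (1 - l) • y)) →
      (∫⁻ x, f x) ^ l * (∫⁻ y, g y) ^ (1 - l) ≤ ∫⁻ z, h z

theorem prekopaLeindler_real : PrekopaLeindler ℝ := by
  intro f g h hf hg hh l hl₀ hl₁ hfgh
  rcases hl₀.eq_or_lt with rfl | hl₀
  · simp only [ENNReal.rpow_zero, one_mul, sub_zero, ENNReal.rpow_one, zero_smul, one_smul,
      zero_add] at hfgh ⊢
    exact lintegral_mono fun y => hfgh 0 y
  rcases hl₁.eq_or_lt with rfl | hl₁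
  · simp only [ENNReal.rpow_one, sub_self, ENNReal.rpow_zero, mul_one, zero_smul, one_smul,
      add_zero] at hfgh ⊢
    exact lintegral_mono fun x => hfgh x 0
  exact Real.lintegral_rpow_mul_rpow_le hf hg hh hl₀ hl₁ hfgh

namespace PrekopaLeindler

variable {E F : Type*} [AddCommGroup E] [Module ℝ E] [MeasureSpace E]
  [AddCommGroup F] [Module ℝ F] [MeasureSpace F]

theorem prod [SFinite (volume : Measure E)] [SFinite (volume : Measure F)]
    (hE : PrekopaLeindler E) (hF : PrekopaLeindler F) : PrekopaLeindler (E × F) := by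
  intro f g h hf hg hh l hl₀ hl₁ hfgh
  rw [Measure.volume_eq_prod, lintegral_prod _ hf.aemeasurable, lintegral_prod _ hg.aemeasurable,
    lintegral_prod _ hh.aemeasurable]
  refine hE _ _ _ hf.lintegral_prod_right' hg.lintegral_prod_right' hh.lintegral_prod_right'
    l hl₀ hl₁ fun x₁ x₂ => ?_
  exact hF _ _ _ (hf.comp measurable_prodMk_left) (hg.comp measurable_prodMk_left)
    (hh.comp measurable_prodMk_left) l hl₀ hl₁ fun y₁ y₂ => hfgh (x₁, y₁) (x₂, y₂)

theorem map (hE : PrekopaLeindler E) (e : E →ₗ[ℝ] F) (he : MeasurePreserving e) :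
    PrekopaLeindler F := by
  intro f g h hf hg hh l hl₀ hl₁ hfgh
  rw [← he.lintegral_comp hf, ← he.lintegral_comp hg, ← he.lintegral_comp hh]
  refine hE _ _ _ (hf.comp he.measurable) (hg.comp he.measurable) (hh.comp he.measurable)
    l hl₀ hl₁ fun x y => ?_
  simpa only [Function.comp_apply, map_add, map_smul] using hfgh (e x) (e y)

end PrekopaLeindler

theorem prekopaLeindler_pi : ∀ n : ℕ, PrekopaLeindler (Fin n → ℝ)
  | 0 => fun f g h _ _ _ _ _ _ hfgh => by
    simp only [lintegral_unique, volume_pi, Measure.pi_univ, Finset.univ_eq_empty,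
      Finset.prod_empty, mul_one]
    simpa only [Subsingleton.elim (_ : Fin 0 → ℝ) default] using hfgh default default
  | n + 1 => by
    have hcons : ⇑(Fin.consLinearEquiv ℝ fun _ : Fin (n + 1) => ℝ) =
        (MeasurableEquiv.piFinSuccAbove (fun _ : Fin (n + 1) => ℝ) 0).symm := by
      ext p : 1
      simp only [MeasurableEquiv.piFinSuccAbove_symm_apply, Fin.insertNthEquiv_zero]
      rfl
    refine (prekopaLeindler_real.prod (prekopaLeindler_pi n)).map
      (Fin.consLinearEquiv ℝ fun _ => ℝ).toLinearMap ?_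
    rw [LinearEquiv.coe_coe, hcons]
    exact (volume_preserving_piFinSuccAbove (fun _ : Fin (n + 1) => ℝ) 0).symm

-- Meant for nonnegative `g`: `Real.rpow` is not the usual power at negative bases.
def IsLogConcave {E : Type*} [AddCommGroup E] [Module ℝ E] (g : E → ℝ) : Prop :=
  ∀ x y : E, ∀ l : ℝ, 0 ≤ l → l ≤ 1 → g x ^ l * g y ^ (1 - l) ≤ g (l • x + (1 - l) • y)

namespace IsLogConcave

variable {E F : Type*} [AddCommGroup E] [Module ℝ E] [AddCommGroup F] [Module ℝ F]

theorem comp_linearMap {g : E → ℝ} (hg : IsLogConcave g) (L : F →ₗ[ℝ] E) :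
    IsLogConcave (g ∘ L) := fun x y l hl₀ hl₁ => by
  simpa only [Function.comp_apply, map_add, map_smul] using hg (L x) (L y) l hl₀ hl₁

theorem mul {f g : E → ℝ} (hf : IsLogConcave f) (hg : IsLogConcave g) (hf₀ : ∀ x, 0 ≤ f x)
    (hg₀ : ∀ x, 0 ≤ g x) : IsLogConcave (f * g) := fun x y l hl₀ hl₁ => by
  simp only [Pi.mul_apply, Real.mul_rpow (hf₀ _) (hg₀ _)]
  calc f x ^ l * g x ^ l * (f y ^ (1 - l) * g y ^ (1 - l))
      = (f x ^ l * f y ^ (1 - l)) * (g x ^ l * g y ^ (1 - l)) := by ring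
    _ ≤ f (l • x + (1 - l) • y) * g (l • x + (1 - l) • y) :=
      mul_le_mul (hf x y l hl₀ hl₁) (hg x y l hl₀ hl₁)
        (mul_nonneg (Real.rpow_nonneg (hg₀ _) _) (Real.rpow_nonneg (hg₀ _) _)) (hf₀ _)

theorem integral_prod_right [MeasurableSpace E] [MeasureSpace F] (hF : PrekopaLeindler F)
    {Φ : E × F → ℝ} (hΦ : IsLogConcave Φ) (hΦ₀ : ∀ p, 0 ≤ Φ p) (hΦm : Measurable Φ)
    (hΦi : ∀ x, Integrable fun y => Φ (x, y)) : IsLogConcave fun x => ∫ y, Φ (x, y) := by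
  intro x₁ x₂ l hl₀ hl₁
  have hlintegral (x : E) : ∫ y, Φ (x, y) = (∫⁻ y, ENNReal.ofReal (Φ (x, y))).toReal :=
    integral_eq_lintegral_of_nonneg_ae (ae_of_all _ fun y => hΦ₀ _)
      (hΦm.comp measurable_prodMk_left).aestronglyMeasurable
  have hmeas (x : E) : Measurable fun y => ENNReal.ofReal (Φ (x, y)) :=
    (hΦm.comp measurable_prodMk_left).ennreal_ofReal
  simp only [hlintegral]
  rw [ENNReal.toReal_rpow, ENNReal.toReal_rpow, ← ENNReal.toReal_mul]
  refine ENNReal.toReal_mono (hΦi _).lintegral_lt_top.ne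
    (hF _ _ _ (hmeas x₁) (hmeas x₂) (hmeas _) l hl₀ hl₁ fun y₁ y₂ => ?_)
  rw [ENNReal.ofReal_rpow_of_nonneg (hΦ₀ _) hl₀,
    ENNReal.ofReal_rpow_of_nonneg (hΦ₀ _) (sub_nonneg.mpr hl₁),
    ← ENNReal.ofReal_mul (Real.rpow_nonneg (hΦ₀ _) _)]
  exact ENNReal.ofReal_le_ofReal (hΦ (x₁, y₁) (x₂, y₂) l hl₀ hl₁)

end IsLogConcave

theorem integral_logconcave (n m : ℕ)
    (h : (Fin n → ℝ) → ℝ)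
    (hh01 : ∀ y, h y ∈ Set.Icc (0 : ℝ) 1)
    (hhmeas : Measurable h)
    (hhlc : ∀ y₁ y₂ : Fin n → ℝ, ∀ l : ℝ, 0 ≤ l → l ≤ 1 →
      h (l • y₁ + (1 - l) • y₂) ≥ h y₁ ^ l * h y₂ ^ (1 - l))
    (ψ : (Fin n → ℝ) → ℝ)
    (hψ0 : ∀ w, 0 ≤ ψ w) (hψmeas : Measurable ψ)
    (hψint : ∫ w, ψ w = 1)
    (hψlc : ∀ w₁ w₂ : Fin n → ℝ, ∀ l : ℝ, 0 ≤ l → l ≤ 1 →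
      ψ (l • w₁ + (1 - l) • w₂) ≥ ψ w₁ ^ l * ψ w₂ ^ (1 - l))
    (A : (Fin n → ℝ) →ₗ[ℝ] (Fin n → ℝ)) (B : (Fin m → ℝ) →ₗ[ℝ] (Fin n → ℝ)) :
    ∀ z₁ z₂ : (Fin n → ℝ) × (Fin m → ℝ), ∀ l : ℝ, 0 ≤ l → l ≤ 1 →
      (∫ w, h (A (l • z₁ + (1 - l) • z₂).1 + B (l • z₁ + (1 - l) • z₂).2 + w) * ψ w) ≥
        (∫ w, h (A z₁.1 + B z₁.2 + w) * ψ w) ^ l *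
          (∫ w, h (A z₂.1 + B z₂.2 + w) * ψ w) ^ (1 - l) := by
  have hψ_int : Integrable ψ := by
    by_contra hψ
    simp [integral_undef hψ] at hψint
  let L : ((Fin n → ℝ) × (Fin m → ℝ)) × (Fin n → ℝ) →ₗ[ℝ] (Fin n → ℝ) :=
    (A.coprod B).comp (LinearMap.fst _ _ _) + LinearMap.snd _ _ _
  have hΦ : IsLogConcave ((h ∘ L) * (ψ ∘ LinearMap.snd ℝ _ _)) :=
    ((IsLogConcave.comp_linearMap hhlc L).mul (IsLogConcave.comp_linearMap hψlc _))
      (fun _ => (hh01 _).1) (fun _ => hψ0 _)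
  have hΦm : Measurable ((h ∘ L) * (ψ ∘ LinearMap.snd ℝ _ _)) :=
    (hhmeas.comp L.continuous_of_finiteDimensional.measurable).mul (hψmeas.comp measurable_snd)
  refine hΦ.integral_prod_right (prekopaLeindler_pi n) (fun _ => mul_nonneg (hh01 _).1 (hψ0 _))
    hΦm fun z => hψ_int.mono' (hΦm.comp measurable_prodMk_left).aestronglyMeasurable
      (ae_of_all _ fun w => ?_)
  simp only [Pi.mul_apply, Function.comp_apply, LinearMap.snd_apply, norm_mul,
    Real.norm_of_nonneg (hψ0 w), Real.norm_of_nonneg (hh01 _).1]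
  exact mul_le_of_le_one_left (hψ0 w) (hh01 _).2
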